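/- Fix a factor index k, a real 1×p matrix L, and symmetric matrices D₁,…,D_r at which V := I_n + ∑_{k=1}^r ∑_{j=1}^{l_k} Z_{(k,j)}·D_k·Z_{(k,j)}ᵀ is positive definite and Xᵀ·V⁻¹·X is invertible. Consider the function S² : ℝ^{q_k(q_k+1)/2} → ℝ obtained by evaluating v ↦ σ²·L·(Xᵀ·V⁻¹·X)⁻¹·Lᵀ with D_k replaced by the unique symmetric matrix whose half-vectorization is v, all other quantities held fixed. Then S² is differentiable at v = vech(D_k) and its gradient there equals σ²·𝒟_{q_k}ᵀ·( ∑_{j=1}^{l_k} B_{(k,j)} ⊗ B_{(k,j)} ), where B_{(k,j)} := Z_{(k,j)}ᵀ·V⁻¹·X·(Xᵀ·V⁻¹·X)⁻¹·Lᵀ is a q_k×1 column vector and ⊗ denotes the Kronecker product. -/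

import Mathlib

open Matrix MeasureTheory ProbabilityTheory

/-- Column-major vectorization of a matrix: the entry of `vec A` at index `(j, i)`
(column `j`, row `i`) is `A i j`. -/
def vec {α β R : Type*} (A : Matrix α β R) : β × α → R := fun p => A p.2 p.1

/-- Index type for the half-vectorization of a `q × q` matrix: pairs `(j, i)`
(column `j`, row `i`) lying on or below the diagonal, i.e. with `j ≤ i`. -/
abbrev VechIdx (q : ℕ) := { p : Fin q × Fin q // p.1 ≤ p.2 }

/-- Half-vectorization: stacks the entries of `A` on and below the diagonal column by column. -/
def vech {R : Type*} {q : ℕ} (A : Matrix (Fin q) (Fin q) R) : VechIdx q → R :=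
  fun p => A p.1.2 p.1.1

/-- The duplication matrix `𝒟_q`: the unique `q² × (q(q+1)/2)` matrix with
`𝒟_q · vech A = vec A` for every symmetric `q × q` matrix `A`. -/
def dup (q : ℕ) : Matrix (Fin q × Fin q) (VechIdx q) ℝ := fun v w =>
  if (v.1 = w.1.1 ∧ v.2 = w.1.2) ∨ (v.1 = w.1.2 ∧ v.2 = w.1.1) then 1 else 0

/-- The commutation matrix `K_{q,q}`: the unique `q² × q²` matrix with
`K_{q,q} · vec A = vec Aᵀ` for every `q × q` matrix `A`. -/
def commMat (q : ℕ) : Matrix (Fin q × Fin q) (Fin q × Fin q) ℝ := fun a b =>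
  if a.1 = b.2 ∧ a.2 = b.1 then 1 else 0

/-- The symmetrization matrix `N_q = (1/2)(I_{q²} + K_{q,q})`. -/
noncomputable def Nmat (q : ℕ) : Matrix (Fin q × Fin q) (Fin q × Fin q) ℝ :=
  (1 / 2 : ℝ) • (1 + commMat q)

/-- The unique symmetric matrix whose half-vectorization is `v`. -/
def unvech {q : ℕ} (v : VechIdx q → ℝ) : Matrix (Fin q) (Fin q) ℝ := fun i j =>
  if h : j ≤ i then v ⟨(j, i), h⟩ else v ⟨(i, j), (le_total j i).resolve_left h⟩
/-!
`V` depends affinely on `vech D_k`, with linear part `v ↦ ∑ⱼ Z_{(k,j)} (unvech v) Z_{(k,j)}ᵀ`.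
Since `d(A⁻¹) = -A⁻¹ (dA) A⁻¹`, differentiating the two inverses in `(Xᵀ V⁻¹ X)⁻¹` produces two
signs that cancel, and the derivative of `S²` in the direction `E = unvech v` is
`σ² c (∑ⱼ Z_{(k,j)} E Z_{(k,j)}ᵀ) cᵀ` with `c = L (Xᵀ V⁻¹ X)⁻¹ Xᵀ V⁻¹`. As `V` is symmetric,
`c Z_{(k,j)} = B_{(k,j)}ᵀ`, so this equals `σ² ∑ⱼ B_{(k,j)}ᵀ E B_{(k,j)} = σ² vec(E)ᵀ ∑ⱼ B ⊗ B`,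
and `vec (unvech e_w)` is the `w`-th column of the duplication matrix.
-/

-- Matrices carry no global norm; the choice is immaterial, as the theorem only involves
-- `VechIdx q → ℝ` and `ℝ`. The linear maps below live on the product topology, which agrees with
-- the norm topology only up to unfolding, so composite derivatives are evaluated with `show`.
attribute [local instance] Matrix.linftyOpNormedAddCommGroup Matrix.linftyOpNormedSpace
  Matrix.linftyOpNormedRing Matrix.linftyOpNormedAlgebra

section Vech

variable {q : ℕ}

theorem unvech_vech {A : Matrix (Fin q) (Fin q) ℝ} (hA : A.IsSymm) : unvech (vech A) = A := by
  ext i j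
  by_cases h : j ≤ i
  · simp [unvech, vech, h]
  · simp [unvech, vech, h, hA.apply i j]

theorem unvech_single_apply (w : VechIdx q) (a b : Fin q) :
    unvech (Pi.single w 1) a b = dup q (a, b) w := by
  obtain ⟨⟨c, d⟩, hcd⟩ := w
  simp only [unvech, dup, Pi.single_apply, Subtype.mk.injEq, Prod.mk.injEq]
  split_ifs <;> grind

noncomputable def unvechCLM : (VechIdx q → ℝ) →L[ℝ] Matrix (Fin q) (Fin q) ℝ :=
  LinearMap.toContinuousLinearMap
    { toFun := unvech
      map_add' := fun a b => by ext i j; by_cases h : j ≤ i <;> simp [unvech, h]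
      map_smul' := fun c a => by ext i j; by_cases h : j ≤ i <;> simp [unvech, h] }

@[simp] theorem unvechCLM_apply (v : VechIdx q → ℝ) : unvechCLM v = unvech v := rfl

theorem sum_transpose_mul_unvech_single_mul_apply {J : Type*} [Fintype J]
    (b : J → Matrix (Fin q) (Fin 1) ℝ) (w : VechIdx q) :
    (∑ j, (b j)ᵀ * unvech (Pi.single w 1) * b j) 0 0 =
      ((dup q)ᵀ *ᵥ fun idx => (∑ j, kroneckerMap (· * ·) (b j) (b j)) idx (0, 0)) w := by
  simp only [Matrix.sum_apply, mul_apply, transpose_apply, unvech_single_apply, mulVec,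
    dotProduct, kroneckerMap_apply, Fintype.sum_prod_type, Finset.sum_mul, Finset.mul_sum]
  conv_lhs => rw [Finset.sum_comm]
  conv_rhs => rw [Finset.sum_comm]
  refine Finset.sum_congr rfl fun c _ => ?_
  rw [Finset.sum_comm]
  refine Finset.sum_congr rfl fun a _ => Finset.sum_congr rfl fun j _ => ?_
  ring

end Vech

namespace Matrix

variable {𝕜 : Type*} [RCLike 𝕜] {l m n o : Type*} [Fintype m] [Fintype n]

noncomputable def mulLeftRightCLM (A : Matrix l m 𝕜) (B : Matrix n o 𝕜) :
    Matrix m n 𝕜 →L[𝕜] Matrix l o 𝕜 :=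
  LinearMap.toContinuousLinearMap (mulRightLinearMap l 𝕜 B ∘ₗ mulLeftLinearMap n 𝕜 A)

@[simp] theorem mulLeftRightCLM_apply (A : Matrix l m 𝕜) (B : Matrix n o 𝕜) (W : Matrix m n 𝕜) :
    mulLeftRightCLM A B W = A * W * B :=
  rfl

theorem hasFDerivAt_inv [DecidableEq m] {A : Matrix m m 𝕜} (hA : IsUnit A) :
    HasFDerivAt (fun B : Matrix m m 𝕜 => B⁻¹) (-mulLeftRightCLM A⁻¹ A⁻¹) A := by
  have h := hasFDerivAt_ringInverse (𝕜 := 𝕜) hA.unit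
  rw [hA.unit_spec, Matrix.coe_units_inv, hA.unit_spec] at h
  rw [show (fun B : Matrix m m 𝕜 => B⁻¹) = Ring.inverse from funext nonsing_inv_eq_ringInverse]
  refine h.congr_fderiv ?_
  ext W : 1
  rfl

end Matrix

section Calculus

variable {𝕜 : Type*} [RCLike 𝕜] {E : Type*} [NormedAddCommGroup E] [NormedSpace 𝕜 E]
  {n p : Type*} [Fintype n] [DecidableEq n] [Fintype p] [DecidableEq p]
  {f : E → Matrix n n 𝕜} {f' : E →L[𝕜] Matrix n n 𝕜} {x : E}

theorem HasFDerivAt.matrix_inv (hf : HasFDerivAt f f' x) (hx : IsUnit (f x)) :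
    HasFDerivAt (fun y => (f y)⁻¹) (-mulLeftRightCLM (f x)⁻¹ (f x)⁻¹ ∘L f') x :=
  (Matrix.hasFDerivAt_inv hx).comp x hf

theorem HasFDerivAt.inv_transpose_mul_inv_mul (X : Matrix n p 𝕜) (hf : HasFDerivAt f f' x)
    (hV : IsUnit (f x)) (hM : IsUnit (Xᵀ * (f x)⁻¹ * X)) :
    HasFDerivAt (fun y => (Xᵀ * (f y)⁻¹ * X)⁻¹)
      (mulLeftRightCLM ((Xᵀ * (f x)⁻¹ * X)⁻¹ * Xᵀ * (f x)⁻¹)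
        ((f x)⁻¹ * X * (Xᵀ * (f x)⁻¹ * X)⁻¹) ∘L f') x := by
  have hconj := (mulLeftRightCLM Xᵀ X).hasFDerivAt.comp x (hf.matrix_inv hV)
  refine (hconj.matrix_inv hM).congr_fderiv ?_
  ext h : 1
  show -(_ * (Xᵀ * -((f x)⁻¹ * f' h * (f x)⁻¹) * X) * _) = _
  simp [Matrix.mul_assoc]

end Calculus

theorem sandwich_sum_eq_sum_transpose_mul_mul {R : Type*} [CommRing R]
    {n p o q J : Type*} [Fintype n] [DecidableEq n] [Fintype p] [DecidableEq p] [Fintype q]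
    [Fintype J] {V : Matrix n n R} (hV : V.IsSymm) (X : Matrix n p R) (L : Matrix o p R)
    (Z : J → Matrix n q R) (E : Matrix q q R) :
    L * ((Xᵀ * V⁻¹ * X)⁻¹ * Xᵀ * V⁻¹ * (∑ j, Z j * E * (Z j)ᵀ) * (V⁻¹ * X * (Xᵀ * V⁻¹ * X)⁻¹)) *
        Lᵀ =
      ∑ j, ((Z j)ᵀ * V⁻¹ * X * (Xᵀ * V⁻¹ * X)⁻¹ * Lᵀ)ᵀ * E *
        ((Z j)ᵀ * V⁻¹ * X * (Xᵀ * V⁻¹ * X)⁻¹ * Lᵀ) := by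
  have hM : (Xᵀ * V⁻¹ * X).IsSymm := by
    simp [IsSymm, transpose_mul, hV.inv.eq, Matrix.mul_assoc]
  simp only [Matrix.mul_sum, Matrix.sum_mul, transpose_mul, transpose_transpose, hV.inv.eq,
    hM.inv.eq]
  simp only [Matrix.mul_assoc]

section MixedModel

variable {n ι : Type*} [DecidableEq n] [Fintype ι] {κ ρ : ι → Type*} [∀ i, Fintype (κ i)]
  [∀ i, Fintype (ρ i)]

def mixedModelCov {R : Type*} [CommRing R] (Z : (i : ι) → κ i → Matrix n (ρ i) R)
    (D : (i : ι) → Matrix (ρ i) (ρ i) R) : Matrix n n R :=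
  1 + ∑ i, ∑ j, Z i j * D i * (Z i j)ᵀ

theorem isSymm_mixedModelCov {R : Type*} [CommRing R] (Z : (i : ι) → κ i → Matrix n (ρ i) R)
    {D : (i : ι) → Matrix (ρ i) (ρ i) R} (hD : ∀ i, (D i).IsSymm) :
    (mixedModelCov Z D).IsSymm := by
  simp [mixedModelCov, IsSymm, transpose_sum, transpose_mul, (hD _).eq, Matrix.mul_assoc]

theorem hasFDerivAt_mixedModelCov_update {𝕜 : Type*} [RCLike 𝕜] [Fintype n] [DecidableEq ι]
    (Z : (i : ι) → κ i → Matrix n (ρ i) 𝕜) (D : (i : ι) → Matrix (ρ i) (ρ i) 𝕜) (k : ι)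
    (A : Matrix (ρ k) (ρ k) 𝕜) :
    HasFDerivAt (fun A => mixedModelCov Z (Function.update D k A))
      (∑ j, mulLeftRightCLM (Z k j) (Z k j)ᵀ) A := by
  have hsplit : ∀ A, mixedModelCov Z (Function.update D k A) =
      1 + ((∑ j, mulLeftRightCLM (Z k j) (Z k j)ᵀ) A +
        ∑ i ∈ Finset.univ \ {k}, ∑ j, Z i j * D i * (Z i j)ᵀ) := by
    intro A
    simp only [mixedModelCov, Function.apply_update (fun i (C : Matrix (ρ i) (ρ i) 𝕜) =>
      ∑ j, Z i j * C * (Z i j)ᵀ), Finset.sum_update_of_mem (Finset.mem_univ k),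
      _root_.sum_apply, mulLeftRightCLM_apply]
  simp only [hsplit]
  exact ((ContinuousLinearMap.hasFDerivAt _).add_const _).const_add _

end MixedModel

theorem stmt11_general (n p r : ℕ) (σ : ℝ)
    (X : Matrix (Fin n) (Fin p) ℝ) (L : Matrix (Fin 1) (Fin p) ℝ)
    (l q : Fin r → ℕ)
    (Z : (k : Fin r) → Fin (l k) → Matrix (Fin n) (Fin (q k)) ℝ)
    (D : (k : Fin r) → Matrix (Fin (q k)) (Fin (q k)) ℝ)
    (hDsymm : ∀ k', (D k').IsSymm)
    (k : Fin r)
    (V : Matrix (Fin n) (Fin n) ℝ)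
    (hV : V = 1 + ∑ k', ∑ j, Z k' j * D k' * (Z k' j)ᵀ)
    (hVpd : V.PosDef)
    (hXVX : IsUnit (Xᵀ * V⁻¹ * X).det)
    (B : Fin (l k) → Matrix (Fin (q k)) (Fin 1) ℝ)
    (hB : ∀ j, B j = (Z k j)ᵀ * V⁻¹ * X * (Xᵀ * V⁻¹ * X)⁻¹ * Lᵀ)
    (S2 : (VechIdx (q k) → ℝ) → ℝ)
    -- `S2 v` is `σ² L (Xᵀ V(v)⁻¹ X)⁻¹ Lᵀ` with `D_k` replaced by the unique symmetric matrix
    -- whose half-vectorization is `v`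
    (hS2 : S2 = fun v =>
      σ ^ 2 * (L * (Xᵀ * (1 + ∑ k', ∑ j,
        Z k' j * Function.update D k (unvech v) k' * (Z k' j)ᵀ)⁻¹ * X)⁻¹ * Lᵀ) 0 0) :
    DifferentiableAt ℝ S2 (vech (D k)) ∧
    ∀ w : VechIdx (q k),
      fderiv ℝ S2 (vech (D k)) (Pi.single w 1) =
        (σ ^ 2 • (dup (q k))ᵀ.mulVec
          (fun idx => (∑ j, kroneckerMap (· * ·) (B j) (B j)) idx (0, 0))) w := by
  have hV₀ : mixedModelCov Z (Function.update D k (unvech (vech (D k)))) = V := by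
    rw [unvech_vech (hDsymm k), Function.update_eq_self]
    exact hV.symm
  have hCov : HasFDerivAt (fun v => mixedModelCov Z (Function.update D k (unvech v)))
      ((∑ j, mulLeftRightCLM (Z k j) (Z k j)ᵀ) ∘L unvechCLM) (vech (D k)) :=
    (hasFDerivAt_mixedModelCov_update Z D k _).comp _ unvechCLM.hasFDerivAt
  have hG := hCov.inv_transpose_mul_inv_mul X (by rw [hV₀]; exact hVpd.isUnit)
    (by rw [hV₀, isUnit_iff_isUnit_det]; exact hXVX)
  rw [hV₀] at hG
  have hS := (((entryLinearMap ℝ ℝ (0 : Fin 1) 0).toContinuousLinearMap.hasFDerivAt.comp _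
    ((mulLeftRightCLM L Lᵀ).hasFDerivAt.comp _ hG)).const_mul (σ ^ 2)).congr_of_eventuallyEq
    (f₁ := S2) (.of_eq (by rw [hS2]; rfl))
  refine ⟨hS.differentiableAt, fun w => ?_⟩
  rw [hS.fderiv]
  show σ ^ 2 * (L * ((Xᵀ * V⁻¹ * X)⁻¹ * Xᵀ * V⁻¹ *
    (∑ j, mulLeftRightCLM (Z k j) (Z k j)ᵀ) (unvech (Pi.single w 1)) *
    (V⁻¹ * X * (Xᵀ * V⁻¹ * X)⁻¹)) * Lᵀ) 0 0 = _
  have hVsymm : V.IsSymm := hV ▸ isSymm_mixedModelCov Z hDsymm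
  simp only [_root_.sum_apply, mulLeftRightCLM_apply, sandwich_sum_eq_sum_transpose_mul_mul hVsymm,
    Pi.smul_apply, smul_eq_mul, ← hB, sum_transpose_mul_unvech_single_mul_apply]

/-- The function `S²(v) = σ² L (Xᵀ V⁻¹ X)⁻¹ Lᵀ`, regarded as a function of
`vech(D_k)` (with `D_k` the unique symmetric matrix having the given half-vectorization, all
other quantities fixed), is differentiable at `vech(D_k)` and its gradient there equals
`σ² 𝒟_{q_k}ᵀ ( ∑_j B_{(k,j)} ⊗ B_{(k,j)} )` where
`B_{(k,j)} = Z_{(k,j)}ᵀ V⁻¹ X (Xᵀ V⁻¹ X)⁻¹ Lᵀ`. -/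
theorem stmt11 (n p r : ℕ) (hn : 0 < n) (hp : 0 < p) (σ : ℝ) (hσ : 0 < σ)
    (X : Matrix (Fin n) (Fin p) ℝ) (L : Matrix (Fin 1) (Fin p) ℝ)
    (l q : Fin r → ℕ)
    (Z : (k : Fin r) → Fin (l k) → Matrix (Fin n) (Fin (q k)) ℝ)
    (D : (k : Fin r) → Matrix (Fin (q k)) (Fin (q k)) ℝ)
    (hDsymm : ∀ k', (D k').IsSymm)
    (k : Fin r)
    (V : Matrix (Fin n) (Fin n) ℝ)
    (hV : V = 1 + ∑ k', ∑ j, Z k' j * D k' * (Z k' j)ᵀ)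
    (hVpd : V.PosDef)
    (hXVX : IsUnit (Xᵀ * V⁻¹ * X).det)
    (B : Fin (l k) → Matrix (Fin (q k)) (Fin 1) ℝ)
    (hB : ∀ j, B j = (Z k j)ᵀ * V⁻¹ * X * (Xᵀ * V⁻¹ * X)⁻¹ * Lᵀ)
    (S2 : (VechIdx (q k) → ℝ) → ℝ)
    -- `S2 v` is `σ² L (Xᵀ V(v)⁻¹ X)⁻¹ Lᵀ` with `D_k` replaced by the unique symmetric matrix
    -- whose half-vectorization is `v`
    (hS2 : S2 = fun v =>
      σ ^ 2 * (L * (Xᵀ * (1 + ∑ k', ∑ j,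
        Z k' j * Function.update D k (unvech v) k' * (Z k' j)ᵀ)⁻¹ * X)⁻¹ * Lᵀ) 0 0) :
    DifferentiableAt ℝ S2 (vech (D k)) ∧
    ∀ w : VechIdx (q k),
      fderiv ℝ S2 (vech (D k)) (Pi.single w 1) =
        (σ ^ 2 • (dup (q k))ᵀ.mulVec
          (fun idx => (∑ j, kroneckerMap (· * ·) (B j) (B j)) idx (0, 0))) w :=
  stmt11_general n p r σ X L l q Z D hDsymm k V hV hVpd hXVX B hB S2 hS2
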